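/- arXiv:1903.06447 — 2 statements merged into one kernel-verified Lean document; each statement's English description precedes it below -/
import Mathlib

section
/- Let n ≥ 1 and for i = 1,…,n let Fᵢ, Fᵢ′ ∈ ℝ and Gᵢ, Gᵢ′ > 0. Let P = ⊗ᵢ N(Fᵢ, Gᵢ²) and Q = ⊗ᵢ N(Fᵢ′, Gᵢ′²) be product Gaussian measures on ℝⁿ and Z = dQ/dP. Then for every z ∈ (0,1), ln ∫ Z^z dP = − Σᵢ (Fᵢ − Fᵢ′)² / ( 2( (1−z)^{-1} Gᵢ² + z^{-1} Gᵢ′² ) ) − Σᵢ ∫_{Gᵢ²}^{Gᵢ′²} (Gᵢ′² − x) / ( 2x( (1−z)^{-1} x + z^{-1} Gᵢ′² ) ) dx, the integrals being signed. -/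
/-!
By Fubini the integral factorises over the coordinates. In one coordinate,
`p₁ (p₂ / p₁) ^ z = p₁ ^ (1 - z) p₂ ^ z` is, after completing the square in the exponent, a
constant times a Gaussian kernel, so its integral is
`exp (-(m₁ - m₂)² / (2 ((1 - z)⁻¹ v₁ + z⁻¹ v₂))) * √(v₁ ^ z v₂ ^ (1 - z) / (z v₁ + (1 - z) v₂))`.
The logarithm of the square-root factor is minus the variance integral of the statement, an
antiderivative of whose integrand is `(z log x - log (z x + (1 - z) v₂)) / 2`.
-/

open MeasureTheory ProbabilityTheory Real NNReal

lemma integral_rpow_prod_pi {ι : Type*} [Fintype ι] {μ : ι → Measure ℝ}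
    [∀ i, SigmaFinite (μ i)] {f : ι → ℝ → ℝ} (hf : ∀ i x, 0 ≤ f i x) (z : ℝ) :
    ∫ y, (∏ i, f i (y i)) ^ z ∂Measure.pi μ = ∏ i, ∫ x, f i x ^ z ∂μ i := by
  rw [← integral_fintype_prod_eq_prod]
  congr 1 with y
  exact (finsetProd_rpow _ _ (fun i _ => hf i (y i)) z).symm

lemma mul_rpow_div_eq_exp {a b : ℝ} (ha : 0 < a) (hb : 0 < b) (z : ℝ) :
    a * (b / a) ^ z = exp ((1 - z) * log a + z * log b) := by
  rw [rpow_def_of_pos (div_pos hb ha), log_div hb.ne' ha.ne', ← exp_log ha, ← exp_add, log_exp]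
  ring_nf

lemma log_gaussianPDFReal (m : ℝ) {v : ℝ≥0} (hv : v ≠ 0) (x : ℝ) :
    log (gaussianPDFReal m v x) = -log (2 * π * v) / 2 - (x - m) ^ 2 / (2 * v) := by
  have hv' : (0 : ℝ) < v := by positivity
  rw [gaussianPDFReal_def, log_mul (by positivity) (exp_pos _).ne', log_inv,
    log_sqrt (by positivity), log_exp]
  ring

lemma integral_exp_neg_mul_sub_sq (k c : ℝ) :
    ∫ x : ℝ, exp (-(k * (x - c) ^ 2)) = √(π / k) := by
  rw [integral_sub_right_eq_self (fun x => exp (-(k * x ^ 2))) c, ← integral_gaussian k]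
  simp_rw [neg_mul]

lemma convex_comb_sq_div_eq (m₁ m₂ : ℝ) {v₁ v₂ z : ℝ} (hv₁ : 0 < v₁) (hv₂ : 0 < v₂)
    (hz₀ : 0 < z) (hz₁ : z < 1) (x : ℝ) :
    (1 - z) * ((x - m₁) ^ 2 / (2 * v₁)) + z * ((x - m₂) ^ 2 / (2 * v₂)) =
      (z * v₁ + (1 - z) * v₂) / (2 * v₁ * v₂) *
          (x - ((1 - z) * v₂ * m₁ + z * v₁ * m₂) / (z * v₁ + (1 - z) * v₂)) ^ 2
        + (m₁ - m₂) ^ 2 / (2 * ((1 - z)⁻¹ * v₁ + z⁻¹ * v₂)) := by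
  have hz : 0 < 1 - z := by linarith
  have hw : 0 < z * v₁ + (1 - z) * v₂ := by positivity
  have hharm : (1 - z)⁻¹ * v₁ + z⁻¹ * v₂ = (z * v₁ + (1 - z) * v₂) / (z * (1 - z)) := by
    field_simp
  rw [hharm]
  field_simp
  ring

lemma intervalIntegral_hellinger_variance_term {u₁ u₂ z : ℝ} (hu₁ : 0 < u₁) (hu₂ : 0 < u₂)
    (hz₀ : 0 < z) (hz₁ : z < 1) :
    ∫ x in u₁..u₂, (u₂ - x) / (2 * x * ((1 - z)⁻¹ * x + z⁻¹ * u₂)) =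
      -((z * log u₁ + (1 - z) * log u₂ - log (z * u₁ + (1 - z) * u₂)) / 2) := by
  have hz₁' : 0 < 1 - z := by linarith
  have hpos : ∀ x ∈ Set.uIcc u₁ u₂, 0 < x := fun x hx =>
    (lt_min hu₁ hu₂).trans_le hx.1
  have hderiv : ∀ x ∈ Set.uIcc u₁ u₂,
      HasDerivAt (fun t => (z * log t - log (z * t + (1 - z) * u₂)) / 2)
        ((u₂ - x) / (2 * x * ((1 - z)⁻¹ * x + z⁻¹ * u₂))) x := by
    intro x hx
    have hx₀ := hpos x hx
    have hw : 0 < z * x + (1 - z) * u₂ := by positivity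
    have hlin : HasDerivAt (fun t => z * t + (1 - z) * u₂) z x := by
      simpa using ((hasDerivAt_id x).const_mul z).add_const ((1 - z) * u₂)
    refine (((hasDerivAt_log hx₀.ne').const_mul z).sub (hlin.log hw.ne')).div_const 2
      |>.congr_deriv ?_
    field_simp
    ring
  have hcont : ContinuousOn (fun x => (u₂ - x) / (2 * x * ((1 - z)⁻¹ * x + z⁻¹ * u₂)))
      (Set.uIcc u₁ u₂) :=
    ContinuousOn.div (by fun_prop) (by fun_prop) fun x hx => by
      have := hpos x hx
      positivity
  have hend : z * u₂ + (1 - z) * u₂ = u₂ := by ring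
  rw [intervalIntegral.integral_eq_sub_of_hasDerivAt hderiv hcont.intervalIntegrable, hend]
  ring

theorem integral_rpow_gaussianPDFReal_div {v₁ v₂ : ℝ≥0} (hv₁ : v₁ ≠ 0) (hv₂ : v₂ ≠ 0)
    (m₁ m₂ : ℝ) {z : ℝ} (hz₀ : 0 < z) (hz₁ : z < 1) :
    ∫ x, (gaussianPDFReal m₂ v₂ x / gaussianPDFReal m₁ v₁ x) ^ z ∂gaussianReal m₁ v₁ =
      exp (-((m₁ - m₂) ^ 2 / (2 * ((1 - z)⁻¹ * v₁ + z⁻¹ * v₂)))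
        - ∫ x in (v₁ : ℝ)..v₂, (v₂ - x) / (2 * x * ((1 - z)⁻¹ * x + z⁻¹ * v₂))) := by
  have hv₁' : (0 : ℝ) < v₁ := by positivity
  have hv₂' : (0 : ℝ) < v₂ := by positivity
  have hw : 0 < z * v₁ + (1 - z) * v₂ := by
    have : 0 < 1 - z := by linarith
    positivity
  set k := (z * v₁ + (1 - z) * v₂) / (2 * v₁ * v₂)
  set c := ((1 - z) * v₂ * m₁ + z * v₁ * m₂) / (z * v₁ + (1 - z) * v₂)
  set D := (m₁ - m₂) ^ 2 / (2 * ((1 - z)⁻¹ * v₁ + z⁻¹ * v₂))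
  have hk : 0 < k := by positivity
  have hintegrand (x : ℝ) :
      gaussianPDFReal m₁ v₁ x * (gaussianPDFReal m₂ v₂ x / gaussianPDFReal m₁ v₁ x) ^ z =
        exp (-((1 - z) * log (2 * π * v₁) + z * log (2 * π * v₂)) / 2 - D) *
          exp (-(k * (x - c) ^ 2)) := by
    rw [mul_rpow_div_eq_exp (gaussianPDFReal_pos _ _ _ hv₁) (gaussianPDFReal_pos _ _ _ hv₂),
      log_gaussianPDFReal _ hv₁, log_gaussianPDFReal _ hv₂, ← exp_add]
    congr 1
    linear_combination -(convex_comb_sq_div_eq m₁ m₂ hv₁' hv₂' hz₀ hz₁ x)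
  have hlog_sqrt : log √(π / k) =
      (log (2 * π) + log v₁ + log v₂ - log (z * v₁ + (1 - z) * v₂)) / 2 := by
    rw [log_sqrt (by positivity), log_div Real.pi_pos.ne' hk.ne', log_div hw.ne' (by positivity),
      log_mul (by positivity) hv₂'.ne', log_mul (by positivity) hv₁'.ne',
      log_mul two_ne_zero Real.pi_pos.ne']
    ring
  simp_rw [integral_gaussianReal_eq_integral_smul hv₁, smul_eq_mul, hintegrand]
  rw [integral_const_mul, integral_exp_neg_mul_sub_sq,
    ← exp_log (sqrt_pos.2 (div_pos Real.pi_pos hk)), ← exp_add, hlog_sqrt,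
    log_mul (by positivity) hv₁'.ne', log_mul (by positivity) hv₂'.ne',
    intervalIntegral_hellinger_variance_term hv₁' hv₂' hz₀ hz₁]
  ring_nf

theorem log_integral_rpow_prod_gaussianPDFReal_div {ι : Type*} [Fintype ι] {v v' : ι → ℝ≥0}
    (hv : ∀ i, v i ≠ 0) (hv' : ∀ i, v' i ≠ 0) (m m' : ι → ℝ) {z : ℝ} (hz₀ : 0 < z)
    (hz₁ : z < 1) :
    log (∫ y, (∏ i, gaussianPDFReal (m' i) (v' i) (y i) / gaussianPDFReal (m i) (v i) (y i)) ^ z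
        ∂Measure.pi fun i => gaussianReal (m i) (v i)) =
      -(∑ i, (m i - m' i) ^ 2 / (2 * ((1 - z)⁻¹ * v i + z⁻¹ * v' i)))
        - ∑ i, ∫ x in (v i : ℝ)..v' i, (v' i - x) / (2 * x * ((1 - z)⁻¹ * x + z⁻¹ * v' i)) := by
  rw [integral_rpow_prod_pi
      (fun i x => div_nonneg (gaussianPDFReal_nonneg _ _ x) (gaussianPDFReal_nonneg _ _ x)),
    Finset.prod_congr rfl fun i _ =>
      integral_rpow_gaussianPDFReal_div (hv i) (hv' i) (m i) (m' i) hz₀ hz₁,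
    ← exp_sum, log_exp, Finset.sum_sub_distrib, Finset.sum_neg_distrib]

theorem stmt_12_general (n : ℕ) (F F' : Fin n → ℝ) (G G' : Fin n → ℝ)
    (hG : ∀ i, 0 < G i) (hG' : ∀ i, 0 < G' i)
    (P : Measure (Fin n → ℝ))
    (hP : P = Measure.pi (fun i => gaussianReal (F i) ⟨G i ^ 2, sq_nonneg (G i)⟩))
    (Z : (Fin n → ℝ) → ℝ)
    (hZ : Z = fun y => ∏ i, gaussianPDFReal (F' i) ⟨G' i ^ 2, sq_nonneg (G' i)⟩ (y i) /
        gaussianPDFReal (F i) ⟨G i ^ 2, sq_nonneg (G i)⟩ (y i))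
    (z : ℝ) (hz0 : 0 < z) (hz1 : z < 1) :
    Real.log (∫ y, Z y ^ z ∂P) =
      -(∑ i, (F i - F' i) ^ 2 / (2 * ((1 - z)⁻¹ * G i ^ 2 + z⁻¹ * G' i ^ 2)))
      - ∑ i, ∫ x in (G i ^ 2)..(G' i ^ 2),
          (G' i ^ 2 - x) / (2 * x * ((1 - z)⁻¹ * x + z⁻¹ * G' i ^ 2)) := by
  have hvar {s : ℝ} (hs : 0 < s) : (⟨s ^ 2, sq_nonneg s⟩ : ℝ≥0) ≠ 0 :=
    NNReal.coe_ne_zero.mp (pow_pos hs 2).ne'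
  subst hP hZ
  exact log_integral_rpow_prod_gaussianPDFReal_div (fun i => hvar (hG i)) (fun i => hvar (hG' i))
    F F' hz0 hz1

/-- For product Gaussian measures `P = ⊗ᵢ N(Fᵢ,Gᵢ²)`,
`Q = ⊗ᵢ N(Fᵢ′,Gᵢ′²)` on `ℝⁿ` and likelihood ratio `Z = dQ/dP` (the product of the
coordinatewise density ratios), for every `z ∈ (0,1)`:
`ln ∫ Z^z dP = −Σᵢ (Fᵢ−Fᵢ′)²/(2((1−z)⁻¹Gᵢ² + z⁻¹Gᵢ′²))
  − Σᵢ ∫_{Gᵢ²}^{Gᵢ′²} (Gᵢ′²−x)/(2x((1−z)⁻¹x + z⁻¹Gᵢ′²)) dx` (signed integrals). -/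
theorem stmt_12 (n : ℕ) (hn : 1 ≤ n) (F F' : Fin n → ℝ) (G G' : Fin n → ℝ)
    (hG : ∀ i, 0 < G i) (hG' : ∀ i, 0 < G' i)
    (P : Measure (Fin n → ℝ))
    (hP : P = Measure.pi (fun i => gaussianReal (F i) ⟨G i ^ 2, sq_nonneg (G i)⟩))
    (Z : (Fin n → ℝ) → ℝ)
    (hZ : Z = fun y => ∏ i, gaussianPDFReal (F' i) ⟨G' i ^ 2, sq_nonneg (G' i)⟩ (y i) /
        gaussianPDFReal (F i) ⟨G i ^ 2, sq_nonneg (G i)⟩ (y i))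
    (z : ℝ) (hz0 : 0 < z) (hz1 : z < 1) :
    Real.log (∫ y, Z y ^ z ∂P) =
      -(∑ i, (F i - F' i) ^ 2 / (2 * ((1 - z)⁻¹ * G i ^ 2 + z⁻¹ * G' i ^ 2)))
      - ∑ i, ∫ x in (G i ^ 2)..(G' i ^ 2),
          (G' i ^ 2 - x) / (2 * x * ((1 - z)⁻¹ * x + z⁻¹ * G' i ^ 2)) :=
  stmt_12_general n F F' G G' hG hG' P hP Z hZ z hz0 hz1
end

section
/- Let f : ℝ → ℝ be uniformly continuous and bounded, and for each n let 0 = t₀ⁿ < t₁ⁿ < ⋯ < tₙⁿ = Tₙ be a partition with Tₙ → ∞ and mesh hₙ = maxᵢ (tᵢⁿ − tᵢ₋₁ⁿ) → 0. Set Fᵢⁿ = ∫_{tᵢ₋₁ⁿ}^{tᵢⁿ} f(t) dt. Then (1/Tₙ) · | Σᵢ (Fᵢⁿ)²/(tᵢⁿ − tᵢ₋₁ⁿ) − ∫₀^{Tₙ} f(t)² dt | → 0 as n → ∞. -/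
/-!
On a block `[a, b]` with mean `A = (∫ f) / (b - a)`, the Cauchy–Schwarz deficit is a variance:
`∫ f² - (∫ f)² / (b - a) = ∫ (f - A)²`. Since `A` is an average of values of `f` on the block,
`|f - A|` is bounded there by the oscillation of `f`, which uniform continuity makes at most `η`
once the mesh is small. Summing over the blocks, the total deficit is at most `η² Tₙ`.
-/

open Filter Set MeasureTheory

section Block

variable {f : ℝ → ℝ} {a b ε : ℝ}

theorem integral_sq_sub_sq_integral_div (hab : a ≠ b) (hf : IntervalIntegrable f volume a b)
    (hf2 : IntervalIntegrable (fun x => f x ^ 2) volume a b) :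
    (∫ x in a..b, f x ^ 2) - (∫ x in a..b, f x) ^ 2 / (b - a)
      = ∫ x in a..b, (f x - (∫ y in a..b, f y) / (b - a)) ^ 2 := by
  set A := (∫ y in a..b, f y) / (b - a) with hA
  have hba : b - a ≠ 0 := sub_ne_zero.mpr hab.symm
  have expand : ∀ x, (f x - A) ^ 2 = f x ^ 2 - 2 * A * f x + A ^ 2 := fun x => by ring
  simp_rw [expand]
  rw [intervalIntegral.integral_add (hf2.sub (hf.const_mul _)) intervalIntegrable_const,
    intervalIntegral.integral_sub hf2 (hf.const_mul _), intervalIntegral.integral_const_mul,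
    intervalIntegral.integral_const, smul_eq_mul, hA]
  field_simp
  ring

theorem abs_sub_integral_div_le (hab : a < b) (hf : IntervalIntegrable f volume a b)
    (hosc : ∀ x ∈ Icc a b, ∀ y ∈ Icc a b, |f x - f y| ≤ ε) {x : ℝ} (hx : x ∈ Icc a b) :
    |f x - (∫ y in a..b, f y) / (b - a)| ≤ ε := by
  have hba : 0 < b - a := sub_pos.mpr hab
  have hmean : f x - (∫ y in a..b, f y) / (b - a) = (∫ y in a..b, (f x - f y)) / (b - a) := by
    rw [intervalIntegral.integral_sub intervalIntegrable_const hf, intervalIntegral.integral_const,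
      smul_eq_mul]
    field_simp
  have hbound : ‖∫ y in a..b, (f x - f y)‖ ≤ ε * |b - a| :=
    intervalIntegral.norm_integral_le_of_norm_le_const fun y hy =>
      hosc x hx y (Ioc_subset_Icc_self (uIoc_of_le hab.le ▸ hy))
  rw [hmean, abs_div, abs_of_pos hba, div_le_iff₀ hba]
  rwa [Real.norm_eq_abs, abs_of_pos hba] at hbound

theorem abs_sq_integral_div_sub_integral_sq_le (hab : a < b) (hf : ContinuousOn f (Icc a b))
    (hosc : ∀ x ∈ Icc a b, ∀ y ∈ Icc a b, |f x - f y| ≤ ε) :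
    |(∫ x in a..b, f x) ^ 2 / (b - a) - ∫ x in a..b, f x ^ 2| ≤ ε ^ 2 * (b - a) := by
  rw [← uIcc_of_le hab.le] at hf
  have hint : IntervalIntegrable f volume a b := hf.intervalIntegrable
  rw [abs_sub_comm, integral_sq_sub_sq_integral_div hab.ne hint (hf.pow 2).intervalIntegrable,
    ← Real.norm_eq_abs]
  refine (intervalIntegral.norm_integral_le_of_norm_le_const fun x hx => ?_).trans_eq
    (by rw [abs_of_pos (sub_pos.mpr hab)])
  have hx' : x ∈ Icc a b := Ioc_subset_Icc_self (uIoc_of_le hab.le ▸ hx)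
  rw [Real.norm_eq_abs, abs_pow]
  exact pow_le_pow_left₀ (abs_nonneg _) (abs_sub_integral_div_le hab hint hosc hx') 2

end Block

theorem abs_sum_sq_integral_div_sub_integral_sq_le {f : ℝ → ℝ} (hf : Continuous f)
    {t : ℕ → ℝ} {n : ℕ} {ε : ℝ} (hmono : ∀ i < n, t i < t (i + 1))
    (hosc : ∀ i < n, ∀ x ∈ Icc (t i) (t (i + 1)), ∀ y ∈ Icc (t i) (t (i + 1)),
      |f x - f y| ≤ ε) :
    |(∑ i ∈ Finset.range n, (∫ x in t i..t (i + 1), f x) ^ 2 / (t (i + 1) - t i))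
      - ∫ x in t 0..t n, f x ^ 2| ≤ ε ^ 2 * (t n - t 0) := by
  have hf2 : Continuous fun x => f x ^ 2 := hf.pow 2
  rw [← intervalIntegral.sum_integral_adjacent_intervals fun i _ => hf2.intervalIntegrable _ _, ← Finset.sum_sub_distrib, ← Finset.sum_range_sub,
    Finset.mul_sum]
  refine (Finset.abs_sum_le_sum_abs _ _).trans (Finset.sum_le_sum fun i hi => ?_)
  rw [Finset.mem_range] at hi
  exact abs_sq_integral_div_sub_integral_sq_le (hmono i hi) hf.continuousOn (hosc i hi)

theorem stmt_18_general (f : ℝ → ℝ) (hf : UniformContinuous f)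
    (t : ℕ → ℕ → ℝ) (h : ℕ → ℝ)
    (ht0 : ∀ n, t n 0 = 0)
    (hmono : ∀ n, ∀ i < n, t n i < t n (i + 1))
    (hmesh : ∀ n, ∀ i < n, t n (i + 1) - t n i ≤ h n)
    (hmesh0 : Tendsto h atTop (nhds 0))
    (hT : Tendsto (fun n => t n n) atTop atTop) :
    Tendsto (fun n => (1 / t n n) *
      |(∑ i ∈ Finset.range n,
          (∫ s in (t n i)..(t n (i + 1)), f s) ^ 2 / (t n (i + 1) - t n i))
        - ∫ s in (0:ℝ)..(t n n), (f s) ^ 2|) atTop (nhds 0) := by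
  rw [NormedAddGroup.tendsto_nhds_zero]
  intro ε hε
  set η := √ε / 2
  obtain ⟨δ, hδ, hfδ⟩ := Metric.uniformContinuous_iff.mp hf η (by positivity)
  filter_upwards [hmesh0.eventually (gt_mem_nhds hδ), hT.eventually_gt_atTop 0] with n hhn hTn
  have hosc : ∀ i < n, ∀ x ∈ Icc (t n i) (t n (i + 1)), ∀ y ∈ Icc (t n i) (t n (i + 1)),
      |f x - f y| ≤ η := fun i hi x hx y hy =>
    (hfδ ((Real.dist_le_of_mem_Icc hx hy).trans_lt ((hmesh n i hi).trans_lt hhn))).le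
  have hsum := abs_sum_sq_integral_div_sub_integral_sq_le hf.continuous (hmono n) hosc
  rw [ht0, sub_zero] at hsum
  have hη : η ^ 2 < ε := by
    rw [div_pow, Real.sq_sqrt hε.le]
    linarith
  rw [Real.norm_eq_abs, abs_mul, abs_abs, abs_of_pos (one_div_pos.mpr hTn), one_div_mul_eq_div,
    div_lt_iff₀ hTn]
  exact hsum.trans_lt (mul_lt_mul_of_pos_right hη hTn)

/-- For `f` uniformly continuous and bounded, and partitions
`0 = t₀ⁿ < ⋯ < tₙⁿ = Tₙ` with `Tₙ → ∞` and mesh `hₙ → 0`, setting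
`Fᵢⁿ = ∫_{tᵢ₋₁ⁿ}^{tᵢⁿ} f`, one has
`(1/Tₙ)|Σᵢ (Fᵢⁿ)²/(tᵢⁿ−tᵢ₋₁ⁿ) − ∫₀^{Tₙ} f²| → 0`. -/
theorem stmt_18 (f : ℝ → ℝ) (hf : UniformContinuous f)
    (C : ℝ) (hfb : ∀ x, |f x| ≤ C)
    (t : ℕ → ℕ → ℝ) (h : ℕ → ℝ)
    (ht0 : ∀ n, t n 0 = 0)
    (hmono : ∀ n, ∀ i < n, t n i < t n (i + 1))
    (hmesh : ∀ n, ∀ i < n, t n (i + 1) - t n i ≤ h n)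
    (hmesh0 : Tendsto h atTop (nhds 0))
    (hT : Tendsto (fun n => t n n) atTop atTop) :
    Tendsto (fun n => (1 / t n n) *
      |(∑ i ∈ Finset.range n,
          (∫ s in (t n i)..(t n (i + 1)), f s) ^ 2 / (t n (i + 1) - t n i))
        - ∫ s in (0:ℝ)..(t n n), (f s) ^ 2|) atTop (nhds 0) :=
  stmt_18_general f hf t h ht0 hmono hmesh hmesh0 hT
end
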